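/- Let ω_s be the near-symplectic form k(df_s ∧ dg) + σ_s on the closed unit ball D⁴ ⊂ ℝ⁴, where f_s = t² + st − x² + y² − z², g = 2tx + 2yz, and σ_s is the closed form ((2t+s)2t + 4x²) dy∧dz + (4y² + 4z²) dt∧dx + 2((2t+s)2z − 4xy) dz∧dx + 2(4xy − 4tz − sz) dt∧dy. Then ω_s is closed for all k and s; moreover σ_s vanishes exactly on the set {y = z = 0, x² + t² + (s/2)t = 0}, the critical set of F_s = (f_s, g). -/

import Mathlib

noncomputable def pT (f : ℝ → ℝ → ℝ → ℝ → ℝ) (t x y z : ℝ) : ℝ :=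
  deriv (fun u => f u x y z) t
noncomputable def pX (f : ℝ → ℝ → ℝ → ℝ → ℝ) (t x y z : ℝ) : ℝ :=
  deriv (fun u => f t u y z) x
noncomputable def pY (f : ℝ → ℝ → ℝ → ℝ → ℝ) (t x y z : ℝ) : ℝ :=
  deriv (fun u => f t x u z) y
noncomputable def pZ (f : ℝ → ℝ → ℝ → ℝ → ℝ) (t x y z : ℝ) : ℝ :=
  deriv (fun u => f t x y u) z

/-! Coefficients of `ω_s = k (df_s ∧ dg) + σ_s`, where
`f_s = t² + st − x² + y² − z²`, `g = 2tx + 2yz`, and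
`σ_s = ((2t+s)2t + 4x²) dy∧dz + (4y² + 4z²) dt∧dx
       + 2((2t+s)2z − 4xy) dz∧dx + 2(4xy − 4tz − sz) dt∧dy`,
in the basis `dt∧dx, dt∧dy, dt∧dz, dx∧dy, dx∧dz, dy∧dz`. -/

def Wtx (k s : ℝ) : ℝ → ℝ → ℝ → ℝ → ℝ := fun t x y z =>
  k * ((2 * t + s) * (2 * t) + 4 * x ^ 2) + (4 * y ^ 2 + 4 * z ^ 2)
def Wty (k s : ℝ) : ℝ → ℝ → ℝ → ℝ → ℝ := fun t x y z =>
  k * ((2 * t + s) * (2 * z) - 4 * x * y) + 2 * (4 * x * y - 4 * t * z - s * z)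
def Wtz (k s : ℝ) : ℝ → ℝ → ℝ → ℝ → ℝ := fun t x y z =>
  k * ((2 * t + s) * (2 * y) + 4 * x * z)
def Wxy (k s : ℝ) : ℝ → ℝ → ℝ → ℝ → ℝ := fun t x y z =>
  k * (-(4 * x * z) - 4 * t * y)
def Wxz (k s : ℝ) : ℝ → ℝ → ℝ → ℝ → ℝ := fun t x y z =>
  k * (-(4 * x * y) + 4 * t * z) - 2 * ((2 * t + s) * (2 * z) - 4 * x * y)
def Wyz (k s : ℝ) : ℝ → ℝ → ℝ → ℝ → ℝ := fun t x y z =>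
  k * (4 * y ^ 2 + 4 * z ^ 2) + ((2 * t + s) * (2 * t) + 4 * x ^ 2)

/-! The closedness of `ω_s` is a computation of partial derivatives of polynomials.
Since `4y² + 4z²` is a coefficient of `σ_s`, the form can only vanish where `y = z = 0`, and there
its only remaining coefficient is `(2t+s)2t + 4x² = 4(x² + t² + (s/2)t)`.
The differential of `F_s` has the matrix `[[2t+s, -2x, 2y, -2z], [2x, 2t, 2z, 2y]]`: its
`(y,z)`-minor is `4(y² + z²)`, and where `y = z = 0` it reduces to its `(t,x)`-block, whose
determinant is again `4(x² + t² + (s/2)t)`. So the critical set is the vanishing locus of `σ_s`,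
because a `2 × 2` linear system is solvable for every right-hand side iff its determinant is
nonzero. -/

theorem LinearMap.rank_lt_finrank_iff_not_surjective {K V W : Type*} [DivisionRing K]
    [AddCommGroup V] [Module K V] [AddCommGroup W] [Module K W] [FiniteDimensional K W]
    (f : V →ₗ[K] W) : f.rank < Module.finrank K W ↔ ¬ Function.Surjective f := by
  rw [← LinearMap.range_eq_top, LinearMap.rank, ← Module.finrank_eq_rank, Nat.cast_lt]
  exact ⟨fun h he => h.ne (by rw [he, finrank_top]), Submodule.finrank_lt⟩

theorem forall_exists_linear_system_iff {K : Type*} [Field K] (a b c d : K) :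
    (∀ r q : K, ∃ u w : K, a * u + b * w = r ∧ c * u + d * w = q) ↔ a * d - b * c ≠ 0 := by
  constructor
  · intro h hdet
    obtain ⟨u₁, w₁, h₁₁, h₂₁⟩ := h 1 0
    obtain ⟨u₂, w₂, h₁₂, h₂₂⟩ := h 0 1
    -- `det M · det U = det (M U) = det 1`
    have : (a * d - b * c) * (u₁ * w₂ - u₂ * w₁) = 1 := by
      linear_combination (c * u₂ + d * w₂) * h₁₁ + h₂₂ - (c * u₁ + d * w₁) * h₁₂
    simp [hdet] at this
  · intro hdet r q
    have hinv := inv_mul_cancel₀ hdet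
    exact ⟨(a * d - b * c)⁻¹ * (d * r - b * q), (a * d - b * c)⁻¹ * (a * q - c * r),
      by linear_combination r * hinv, by linear_combination q * hinv⟩

theorem d_omega_eq_zero (k s t x y z : ℝ) :
    pT (Wxy k s) t x y z - pX (Wty k s) t x y z + pY (Wtx k s) t x y z = 0 ∧
      pT (Wxz k s) t x y z - pX (Wtz k s) t x y z + pZ (Wtx k s) t x y z = 0 ∧
      pT (Wyz k s) t x y z - pY (Wtz k s) t x y z + pZ (Wty k s) t x y z = 0 ∧
      pX (Wyz k s) t x y z - pY (Wxz k s) t x y z + pZ (Wxy k s) t x y z = 0 := by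
  simp (disch := fun_prop) only [pT, pX, pY, pZ, Wtx, Wty, Wtz, Wxy, Wxz, Wyz, deriv_fun_add,
    deriv_fun_sub, deriv_fun_mul, deriv.fun_neg, deriv_const, deriv_pow_field, deriv_const_mul_id']
  refine ⟨by ring, by ring, by ring, by ring⟩

theorem sigma_eq_zero_iff (s t x y z : ℝ) :
    (4 * y ^ 2 + 4 * z ^ 2 = 0 ∧ 2 * (4 * x * y - 4 * t * z - s * z) = 0 ∧
        -(2 * ((2 * t + s) * (2 * z) - 4 * x * y)) = 0 ∧ (2 * t + s) * (2 * t) + 4 * x ^ 2 = 0) ↔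
      y = 0 ∧ z = 0 ∧ x ^ 2 + t ^ 2 + (s / 2) * t = 0 := by
  constructor
  · rintro ⟨hyz, -, -, htx⟩
    have hy : y = 0 := by nlinarith [sq_nonneg y, sq_nonneg z]
    have hz : z = 0 := by nlinarith [sq_nonneg y, sq_nonneg z]
    exact ⟨hy, hz, by linear_combination htx / 4⟩
  · rintro ⟨rfl, rfl, h⟩
    exact ⟨by ring, by ring, by ring, by linear_combination 4 * h⟩

def fgMap (s : ℝ) : ℝ × ℝ × ℝ × ℝ → ℝ × ℝ := fun q =>
  (q.1 ^ 2 + s * q.1 - q.2.1 ^ 2 + q.2.2.1 ^ 2 - q.2.2.2 ^ 2, 2 * q.1 * q.2.1 + 2 * q.2.2.1 * q.2.2.2)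

theorem fderiv_fgMap_apply (s : ℝ) (p v : ℝ × ℝ × ℝ × ℝ) :
    fderiv ℝ (fgMap s) p v =
      ((2 * p.1 + s) * v.1 - 2 * p.2.1 * v.2.1 + 2 * p.2.2.1 * v.2.2.1 - 2 * p.2.2.2 * v.2.2.2,
       2 * p.2.1 * v.1 + 2 * p.1 * v.2.1 + 2 * p.2.2.2 * v.2.2.1 + 2 * p.2.2.1 * v.2.2.2) := by
  unfold fgMap
  simp (disch := fun_prop) only [DifferentiableAt.fderiv_prodMk, fderiv_fun_sub, fderiv_fun_add,
    fderiv_fun_mul, fderiv_fun_pow, fderiv_fun_const, fderiv.fst, fderiv.snd, fderiv_fun_id,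
    ContinuousLinearMap.comp_id, ContinuousLinearMap.prod_apply, sub_apply,
    add_apply, smul_apply, ContinuousLinearMap.coe_fst',
    ContinuousLinearMap.coe_snd', ContinuousLinearMap.comp_apply, zero_apply,
    Pi.zero_apply, smul_eq_mul, nsmul_eq_mul, Prod.mk.injEq]
  constructor <;> ring

theorem surjective_fderiv_fgMap_iff (s t x y z : ℝ) :
    Function.Surjective (fderiv ℝ (fgMap s) (t, x, y, z)) ↔
      ¬ (y = 0 ∧ z = 0 ∧ x ^ 2 + t ^ 2 + (s / 2) * t = 0) := by
  simp only [Function.Surjective, Prod.forall, Prod.exists, fderiv_fgMap_apply, Prod.mk.injEq]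
  constructor
  · rintro hsurj ⟨rfl, rfl, htx⟩
    have hdet : (2 * t + s) * (2 * t) - (-(2 * x)) * (2 * x) ≠ 0 := by
      refine (forall_exists_linear_system_iff _ _ _ _).1 fun r q => ?_
      obtain ⟨u, w, _, _, h₁, h₂⟩ := hsurj r q
      exact ⟨u, w, by linear_combination h₁, by linear_combination h₂⟩
    exact hdet (by linear_combination 4 * htx)
  · intro hcrit r q
    by_cases hyz : y = 0 ∧ z = 0
    · obtain ⟨rfl, rfl⟩ := hyz
      have hdet : (2 * t + s) * (2 * t) - (-(2 * x)) * (2 * x) ≠ 0 := fun h =>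
        hcrit ⟨rfl, rfl, by linear_combination h / 4⟩
      obtain ⟨u, w, h₁, h₂⟩ := (forall_exists_linear_system_iff _ _ _ _).2 hdet r q
      exact ⟨u, w, 0, 0, by linear_combination h₁, by linear_combination h₂⟩
    · have hpos : 0 < y ^ 2 + z ^ 2 := by
        rcases not_and_or.1 hyz with hy | hz <;> positivity
      have hdet : 2 * y * (2 * y) - (-(2 * z)) * (2 * z) ≠ 0 := fun h =>
        hpos.ne' (by linear_combination h / 4)
      obtain ⟨u, w, h₁, h₂⟩ := (forall_exists_linear_system_iff _ _ _ _).2 hdet r q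
      exact ⟨0, 0, u, w, by linear_combination h₁, by linear_combination h₂⟩

/-- `ω_s = k(df_s ∧ dg) + σ_s` is closed for all `k` and `s`; moreover `σ_s`
vanishes exactly on `{y = z = 0, x² + t² + (s/2)t = 0}`, the critical set of
`F_s = (f_s, g)`. -/
theorem stmt18 (k s : ℝ) :
    (∀ t x y z : ℝ,
      pT (Wxy k s) t x y z - pX (Wty k s) t x y z + pY (Wtx k s) t x y z = 0 ∧
      pT (Wxz k s) t x y z - pX (Wtz k s) t x y z + pZ (Wtx k s) t x y z = 0 ∧
      pT (Wyz k s) t x y z - pY (Wtz k s) t x y z + pZ (Wty k s) t x y z = 0 ∧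
      pX (Wyz k s) t x y z - pY (Wxz k s) t x y z + pZ (Wxy k s) t x y z = 0) ∧
    {p : ℝ × ℝ × ℝ × ℝ |
        4 * p.2.2.1 ^ 2 + 4 * p.2.2.2 ^ 2 = 0 ∧
        2 * (4 * p.2.1 * p.2.2.1 - 4 * p.1 * p.2.2.2 - s * p.2.2.2) = 0 ∧
        -(2 * ((2 * p.1 + s) * (2 * p.2.2.2) - 4 * p.2.1 * p.2.2.1)) = 0 ∧
        (2 * p.1 + s) * (2 * p.1) + 4 * p.2.1 ^ 2 = 0} =
      {p : ℝ × ℝ × ℝ × ℝ |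
        p.2.2.1 = 0 ∧ p.2.2.2 = 0 ∧
        p.2.1 ^ 2 + p.1 ^ 2 + (s / 2) * p.1 = 0} ∧
    {p : ℝ × ℝ × ℝ × ℝ |
        p.2.2.1 = 0 ∧ p.2.2.2 = 0 ∧
        p.2.1 ^ 2 + p.1 ^ 2 + (s / 2) * p.1 = 0} =
      {p : ℝ × ℝ × ℝ × ℝ |
        LinearMap.rank (fderiv ℝ
          (fun q : ℝ × ℝ × ℝ × ℝ =>
            ((q.1 ^ 2 + s * q.1 - q.2.1 ^ 2 + q.2.2.1 ^ 2 - q.2.2.2 ^ 2,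
              2 * q.1 * q.2.1 + 2 * q.2.2.1 * q.2.2.2) : ℝ × ℝ)) p).toLinearMap < 2} := by
  refine ⟨d_omega_eq_zero k s, ?_, ?_⟩
  · ext ⟨t, x, y, z⟩
    exact sigma_eq_zero_iff s t x y z
  · ext ⟨t, x, y, z⟩
    change _ ↔ LinearMap.rank (fderiv ℝ (fgMap s) (t, x, y, z)).toLinearMap < 2
    have hdim : (2 : Cardinal) = Module.finrank ℝ (ℝ × ℝ) := by simp
    rw [hdim, LinearMap.rank_lt_finrank_iff_not_surjective, ContinuousLinearMap.coe_coe,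
      surjective_fderiv_fgMap_iff, not_not, Set.mem_ofPred_eq]
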